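/- Every nonnegative Lagrange structure R ⊆ F × F* (a Lagrange structure on which e(f) ≥ 0 for all (f,e) ∈ R) is a maximally monotone structure. -/

import Mathlib

/-!
A Lagrange structure `R` is maximal isotropic for the symplectic form
`ω((f₁, e₁), (f₂, e₂)) = e₁ f₂ - e₂ f₁` on `F × F*`, hence equal to its `ω`-orthogonal; as `ω` is
nondegenerate this forces `dim R = dim F`. On the other hand, after choosing a basis `b` of `F`,
the graph of `-b.toDual` is a `dim F`-dimensional subspace on which `e f < 0` away from `0`, so a
monotone subspace meets it trivially and has dimension at most `dim F`. A monotone subspace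
containing `R` therefore equals `R`.
-/

open Module
open LinearMap (BilinForm)

namespace LinearMap.BilinForm

variable {K V : Type*} [AddCommGroup V]

theorem orthogonal_eq_self_of_isAlt_of_maximal [CommRing K] [Module K V] {B : BilinForm K V}
    (hB : B.IsAlt) {W : Submodule K V} (hW : ∀ x ∈ W, ∀ y ∈ W, B x y = 0)
    (hmax : ∀ W' : Submodule K V, (∀ x ∈ W', ∀ y ∈ W', B x y = 0) → W ≤ W' → W' = W) :
    B.orthogonal W = W := by
  refine le_antisymm (fun p hp => ?_) fun y hy x hx => hW x hx y hy
  rw [mem_orthogonal_iff] at hp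
  have hp' : ∀ w ∈ W, B p w = 0 := fun w hw => hB.isRefl _ _ (hp w hw)
  have hiso : ∀ x ∈ W ⊔ K ∙ p, ∀ y ∈ W ⊔ K ∙ p, B x y = 0 := by
    intro x hx y hy
    obtain ⟨w, hw, _, hc, rfl⟩ := Submodule.mem_sup.mp hx
    obtain ⟨w', hw', _, hc', rfl⟩ := Submodule.mem_sup.mp hy
    obtain ⟨c, rfl⟩ := Submodule.mem_span_singleton.mp hc
    obtain ⟨c', rfl⟩ := Submodule.mem_span_singleton.mp hc'
    simp [hW w hw w' hw', hp w hw, hp' w' hw', hB p]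
  rw [← hmax _ hiso le_sup_left]
  exact Submodule.mem_sup_right (Submodule.mem_span_singleton_self p)

theorem two_mul_finrank_eq_of_orthogonal_eq_self [Field K] [Module K V] [FiniteDimensional K V]
    {B : BilinForm K V} (hB : B.Nondegenerate) {W : Submodule K V} (hW : B.orthogonal W = W) :
    2 * finrank K W = finrank K V := by
  have h := finrank_orthogonal hB W
  rw [hW] at h
  have := Submodule.finrank_le W
  omega

end LinearMap.BilinForm

namespace Module.Dual

variable (K M : Type*) [AddCommGroup M]

def symplecticForm [CommRing K] [Module K M] : LinearMap.BilinForm K (M × Dual K M) :=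
  LinearMap.mk₂ K (fun p q => p.2 q.1 - q.2 p.1)
    (fun _ _ _ => by simp only [Prod.fst_add, Prod.snd_add, map_add, LinearMap.add_apply]; ring)
    (fun _ _ _ => by simp only [Prod.smul_fst, Prod.smul_snd, map_smul, LinearMap.smul_apply, smul_eq_mul]; ring)
    (fun _ _ _ => by simp only [Prod.fst_add, Prod.snd_add, map_add, LinearMap.add_apply]; ring)
    (fun _ _ _ => by simp only [Prod.smul_fst, Prod.smul_snd, map_smul, LinearMap.smul_apply, smul_eq_mul]; ring)

section CommRing

variable [CommRing K] [Module K M]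

@[simp]
theorem symplecticForm_apply (p q : M × Dual K M) :
    symplecticForm K M p q = p.2 q.1 - q.2 p.1 :=
  rfl

theorem symplecticForm_isAlt : (symplecticForm K M).IsAlt :=
  fun p => sub_self (p.2 p.1)

theorem symplecticForm_nondegenerate [Projective K M] : (symplecticForm K M).Nondegenerate := by
  refine (symplecticForm_isAlt K M).isRefl.nondegenerate_iff_separatingLeft.mpr fun p hp => ?_
  have h2 : p.2 = 0 := LinearMap.ext fun x => by simpa using hp (x, 0)
  have h1 : p.1 = 0 := (forall_dual_apply_eq_zero_iff K p.1).mp fun e => by simpa using hp (0, e)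
  exact Prod.ext h1 h2

end CommRing

theorem finrank_eq_of_isotropic_of_maximal [Field K] [Module K M] [FiniteDimensional K M]
    {W : Submodule K (M × Dual K M)} (hW : ∀ p ∈ W, ∀ q ∈ W, symplecticForm K M p q = 0)
    (hmax : ∀ W' : Submodule K (M × Dual K M),
      (∀ p ∈ W', ∀ q ∈ W', symplecticForm K M p q = 0) → W ≤ W' → W' = W) :
    finrank K W = finrank K M := by
  have h := LinearMap.BilinForm.two_mul_finrank_eq_of_orthogonal_eq_self
    (symplecticForm_nondegenerate K M)
    (LinearMap.BilinForm.orthogonal_eq_self_of_isAlt_of_maximal (symplecticForm_isAlt K M) hW hmax)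
  rw [finrank_prod, Subspace.dual_finrank_eq] at h
  omega

end Module.Dual

namespace Module.Basis

variable {ι K V : Type*} [Fintype ι] [DecidableEq ι] [CommRing K] [AddCommGroup V] [Module K V]

theorem toDual_apply_self (b : Basis ι K V) (f : V) :
    b.toDual f f = ∑ i, b.repr f i * b.repr f i := by
  conv_lhs => enter [2]; rw [← b.sum_repr f]
  simp only [map_sum, map_smul, toDual_eq_repr, smul_eq_mul]

theorem toDual_apply_self_pos [LinearOrder K] [IsStrictOrderedRing K] (b : Basis ι K V) {f : V}
    (hf : f ≠ 0) : 0 < b.toDual f f := by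
  obtain ⟨i, hi⟩ : ∃ i, b.repr f i ≠ 0 := by
    by_contra! h
    exact hf (b.repr.injective (Finsupp.ext fun i => by simpa using h i))
  rw [toDual_apply_self]
  exact Finset.sum_pos' (fun j _ => mul_self_nonneg _) ⟨i, Finset.mem_univ i, mul_self_pos.mpr hi⟩

end Module.Basis

theorem Module.Dual.finrank_le_of_apply_nonneg {K V : Type*} [Field K] [LinearOrder K]
    [IsStrictOrderedRing K] [AddCommGroup V] [Module K V] [FiniteDimensional K V]
    (M : Submodule K (V × Dual K V)) (hM : ∀ p ∈ M, 0 ≤ p.2 p.1) :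
    finrank K M ≤ finrank K V := by
  let b := finBasis K V
  let L : V →ₗ[K] V × Dual K V := LinearMap.id.prod (-b.toDual)
  have hL : Function.Injective L := fun x y h => congrArg Prod.fst h
  have hdisj : Disjoint M (LinearMap.range L) := by
    rw [Submodule.disjoint_def]
    rintro _ hM' ⟨f, rfl⟩
    by_contra hf
    have hneg : 0 ≤ -b.toDual f f := hM _ hM'
    have hpos := b.toDual_apply_self_pos fun h : f = 0 => hf (by rw [h, map_zero])
    linarith
  have := Submodule.finrank_add_finrank_le_of_disjoint hdisj
  rw [LinearMap.finrank_range_of_inj hL, finrank_prod, Subspace.dual_finrank_eq] at this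
  omega

theorem nonneg_lagrange_is_maximally_monotone
    (F : Type*) [AddCommGroup F] [Module ℝ F] [FiniteDimensional ℝ F]
    (R : Submodule ℝ (F × Module.Dual ℝ F))
    (hR0 : ∀ p ∈ R, ∀ q ∈ R, p.2 q.1 - q.2 p.1 = 0)
    (hRmax : ∀ R' : Submodule ℝ (F × Module.Dual ℝ F),
        (∀ p ∈ R', ∀ q ∈ R', p.2 q.1 - q.2 p.1 = 0) → R ≤ R' → R' = R)
    (hRpos : ∀ p ∈ R, (0 : ℝ) ≤ p.2 p.1) :
    (∀ p ∈ R, (0 : ℝ) ≤ p.2 p.1) ∧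
      (∀ M' : Submodule ℝ (F × Module.Dual ℝ F),
        (∀ p ∈ M', (0 : ℝ) ≤ p.2 p.1) → R ≤ M' → M' = R) := by
  refine ⟨hRpos, fun M hM hRM => ?_⟩
  have hR : finrank ℝ R = finrank ℝ F :=
    Module.Dual.finrank_eq_of_isotropic_of_maximal ℝ F hR0 hRmax
  exact (Submodule.eq_of_le_of_finrank_le hRM
    (hR ▸ Module.Dual.finrank_le_of_apply_nonneg M hM)).symm
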